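/- arXiv:2003.06362 — 3 statements merged into one kernel-verified Lean document; each statement's English description precedes it below -/
import Mathlib

section
/- Let X be a real normed vector space, d, r ∈ ℕ, and Z a set. Let T : ℝ^d → (X →ₗ[ℝ] X) satisfy T(a+b) = T(a) ∘ T(b) for all a, b ∈ ℝ^d. Let F : X → X be Lipschitz with constant L ≥ 0 and commute with the shifts, i.e. T(a)(F(v)) = F(T(a)(v)) for all a ∈ ℝ^d, v ∈ X. Let c : Z × Z → ℝ^d satisfy (C1) and (C2), let U₁, …, U_r ∈ X, z₁, …, z_r, z_ref ∈ Z, α₁, …, α_r : Z → ℝ, and Δt ≥ 0. Define U_m(z) := Σᵢ αᵢ(z)·T(c(z, zᵢ))(Uᵢ), Ũ_m(z) := Σᵢ αᵢ(z)·T(c(z_ref, zᵢ))(Uᵢ), and Res(w, v) := w − v − Δt·F(v). Then for all z, z′ ∈ Z, ‖ T(−c(z′, z_ref))(Res(U_m(z′), U_m(z))) − ( Ũ_m(z′) − Ũ_m(z) − Δt·F(Ũ_m(z)) ) ‖ ≤ (1 + Δt·L) · ‖ T(c(z, z′))(Ũ_m(z)) − Ũ_m(z) ‖. In particular, the shifted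 residual equals the transport-free residual Res*(z, z′) := Ũ_m(z′) − Ũ_m(z) − Δt·F(Ũ_m(z)) up to an error controlled by how little Ũ_m(z) moves under the shift T(c(z, z′)). -/
/-- Quantitative form of Lemma 5.1: the shifted explicit-Euler residual equals the
transport-free residual up to an error controlled by how little the reference
reduced solution moves under the shift `T (c (z, z'))`. -/
theorem shifted_residual_near_transport_free
    {X : Type*} [NormedAddCommGroup X] [NormedSpace ℝ X]
    (d r : ℕ) {Z : Type*}
    (T : (Fin d → ℝ) → (X →ₗ[ℝ] X))
    (hT : ∀ a b : Fin d → ℝ, T (a + b) = (T a).comp (T b))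
    (F : X → X) (L : ℝ) (hL : 0 ≤ L)
    (hFLip : ∀ v w : X, ‖F v - F w‖ ≤ L * ‖v - w‖)
    (hComm : ∀ (a : Fin d → ℝ) (v : X), T a (F v) = F (T a v))
    (c : Z × Z → (Fin d → ℝ))
    (hC1 : ∀ z zhat : Z, c (z, zhat) = - c (zhat, z))
    (hC2 : ∀ z zhat ztil : Z, c (z, ztil) = c (z, zhat) + c (zhat, ztil))
    (U : Fin r → X) (zs : Fin r → Z) (zref : Z)
    (α : Fin r → Z → ℝ) (Δt : ℝ) (hΔt : 0 ≤ Δt)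
    (Um Utm : Z → X)
    (hUm : ∀ z : Z, Um z = ∑ i, α i z • T (c (z, zs i)) (U i))
    (hUtm : ∀ z : Z, Utm z = ∑ i, α i z • T (c (zref, zs i)) (U i))
    (Res : X → X → X)
    (hRes : ∀ w v : X, Res w v = w - v - Δt • F v) :
    ∀ z z' : Z,
      ‖T (-(c (z', zref))) (Res (Um z') (Um z))
          - (Utm z' - Utm z - Δt • F (Utm z))‖
        ≤ (1 + Δt * L) * ‖T (c (z, z')) (Utm z) - Utm z‖ := by
  intro z z'
  have ha : -(c (z', zref)) = c (zref, z') := by rw [hC1 zref z']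
  set a := c (zref, z') with haa
  have hTT : ∀ (b : Fin d → ℝ) (v : X), T a (T b v) = T (a + b) v := by
    intro b v; rw [hT]; rfl
  have h1 : T a (Um z') = Utm z' := by
    rw [hUm, hUtm, map_sum]
    refine Finset.sum_congr rfl fun i _ => ?_
    rw [map_smul, hTT]
    congr 2
    rw [hC2 zref z' (zs i)]
  have h2 : T a (Um z) = T (c (z, z')) (Utm z) := by
    rw [hUm, hUtm, map_sum, map_sum]
    refine Finset.sum_congr rfl fun i _ => ?_
    rw [map_smul, map_smul, hTT, ← LinearMap.comp_apply, ← hT]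
    congr 2
    rw [hC2 z zref (zs i), hC2 z zref z', haa]
    abel
  set W := T (c (z, z')) (Utm z) with hW
  have hexp : T (-(c (z', zref))) (Res (Um z') (Um z))
      = Utm z' - W - Δt • F W := by
    rw [hRes, ha, map_sub, map_sub, map_smul, hComm, h1, h2]
  rw [hexp]
  have hdiff : Utm z' - W - Δt • F W - (Utm z' - Utm z - Δt • F (Utm z))
      = -(W - Utm z) - Δt • (F W - F (Utm z)) := by
    rw [smul_sub]; abel
  rw [hdiff]
  calc ‖-(W - Utm z) - Δt • (F W - F (Utm z))‖
      ≤ ‖-(W - Utm z)‖ + ‖Δt • (F W - F (Utm z))‖ := norm_sub_le _ _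
    _ ≤ ‖W - Utm z‖ + Δt * (L * ‖W - Utm z‖) := by
        rw [norm_neg, norm_smul, Real.norm_of_nonneg hΔt]
        exact add_le_add le_rfl (mul_le_mul_of_nonneg_left (hFLip _ _) hΔt)
    _ = (1 + Δt * L) * ‖W - Utm z‖ := by ring
end

section
/- Let X be a real normed vector space, d, r ∈ ℕ, and Z a set. Let T : ℝ^d → (X →ₗ[ℝ] X) satisfy T(a+b) = T(a) ∘ T(b) for all a, b ∈ ℝ^d. Let F : X → X commute with the shifts, i.e. T(a)(F(v)) = F(T(a)(v)) for all a ∈ ℝ^d, v ∈ X. Let c : Z × Z → ℝ^d satisfy (C1) and (C2), let U₁, …, U_r ∈ X, z₁, …, z_r, z_ref ∈ Z, α₁, …, α_r : Z → ℝ, and Δt ∈ ℝ. Define U_m(z) := Σᵢ αᵢ(z)·T(c(z, zᵢ))(Uᵢ), Ũ_m(z) := Σᵢ αᵢ(z)·T(c(z_ref, zᵢ))(Uᵢ), and Res(w, v) := w − v − Δt·F(v). Then for all z, z′ ∈ Z the exact identity holds: T(−c(z′, z_ref))(Res(U_m(z′), U_m(z))) = Ũ_m(z′) − T(c(z, z′))(Ũ_m(z))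 − Δt·F( T(c(z, z′))(Ũ_m(z)) ). -/
/-- Exact algebraic identity from the proof of Lemma 5.1 (Appendix B): the shifted
explicit-Euler residual of the reduced solution equals the residual of the
reference-shifted reduced solution with the intermediate shift `T (c (z, z'))`. -/
theorem shifted_residual_identity
    {X : Type*} [NormedAddCommGroup X] [NormedSpace ℝ X]
    (d r : ℕ) {Z : Type*}
    (T : (Fin d → ℝ) → (X →ₗ[ℝ] X))
    (hT : ∀ a b : Fin d → ℝ, T (a + b) = (T a).comp (T b))
    (F : X → X)
    (hComm : ∀ (a : Fin d → ℝ) (v : X), T a (F v) = F (T a v))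
    (c : Z × Z → (Fin d → ℝ))
    (hC1 : ∀ z zhat : Z, c (z, zhat) = - c (zhat, z))
    (hC2 : ∀ z zhat ztil : Z, c (z, ztil) = c (z, zhat) + c (zhat, ztil))
    (U : Fin r → X) (zs : Fin r → Z) (zref : Z)
    (α : Fin r → Z → ℝ) (Δt : ℝ)
    (Um Utm : Z → X)
    (hUm : ∀ z : Z, Um z = ∑ i, α i z • T (c (z, zs i)) (U i))
    (hUtm : ∀ z : Z, Utm z = ∑ i, α i z • T (c (zref, zs i)) (U i))
    (Res : X → X → X)
    (hRes : ∀ w v : X, Res w v = w - v - Δt • F v) :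
    ∀ z z' : Z,
      T (-(c (z', zref))) (Res (Um z') (Um z))
        = Utm z' - T (c (z, z')) (Utm z) - Δt • F (T (c (z, z')) (Utm z)) := by
  intro z z'
  have key : ∀ (a b : Fin d → ℝ) (v : X), T a (T b v) = T (a + b) v := by
    intro a b v; rw [hT]; rfl
  have hneg : -(c (z', zref)) = c (zref, z') := by rw [hC1 zref z']
  have h1 : T (-(c (z', zref))) (Um z') = Utm z' := by
    rw [hneg, hUm, hUtm, map_sum]
    refine Finset.sum_congr rfl fun i _ => ?_
    rw [map_smul, key, ← hC2 zref z' (zs i)]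
  have h2 : T (-(c (z', zref))) (Um z) = T (c (z, z')) (Utm z) := by
    rw [hneg, hUm, hUtm, map_sum, map_sum]
    refine Finset.sum_congr rfl fun i _ => ?_
    rw [map_smul, map_smul, key, key]
    congr 1
    have e1 : c (zref, z') + c (z, zs i) = c (zref, z') + (c (z, z') + c (z', zs i)) := by
      rw [← hC2 z z' (zs i)]
    have e2 : c (z, z') + c (zref, zs i) = c (z, z') + (c (zref, z') + c (z', zs i)) := by
      rw [← hC2 zref z' (zs i)]
    rw [e1, e2]; abel
  rw [hRes, map_sub, map_sub, map_smul, hComm, h1, h2]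
end

section
/- Let Ω = (−1, 2) ⊂ ℝ and define g : ℝ × ℝ → ℝ by g(x, z) := (1 + z) if x ≤ z and 0 otherwise. Consider the solution set G := { g(·, z)|_Ω : z ∈ [0, 1] } as a subset of L²(Ω). Then the Kolmogorov m-width of G decays no faster than m^{−1/2}: there exists a constant C > 0 such that for every m ≥ 1 and every subspace V ⊆ L²(Ω) with dim V ≤ m, sup_{z ∈ [0,1]} dist_{L²(Ω)}( g(·, z)|_Ω, V ) ≥ C·m^{−1/2}. -/
/-!
The normalized increments `√N (𝟙{· ≤ (k+1)/N} - 𝟙{· ≤ k/N})`, `k < N`, are orthonormal in `L²`.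
By Bessel's inequality an orthonormal family of `N` vectors has total squared distance at least
`N - dim V` to a subspace `V`, while each increment lies within `2√N · S` of `V` when every step
`𝟙{· ≤ z}` lies within `S` of `V`. Taking `N = 2m` gives `m ≤ 16 m² S²`, i.e. `S ≥ 1 / (4√m)`;
the factor `1 + z ≥ 1` of the solution set only increases distances.
-/

open MeasureTheory Function

namespace Submodule

variable {𝕜 E : Type*} [RCLike 𝕜] [NormedAddCommGroup E] [InnerProductSpace 𝕜 E]
  (K : Submodule 𝕜 E) [K.HasOrthogonalProjection]

theorem infDist_eq_norm_starProjection_orthogonal (x : E) :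
    Metric.infDist x K = ‖Kᗮ.starProjection x‖ := by
  rw [starProjection_orthogonal_val, starProjection_minimal, Metric.infDist_eq_iInf]
  simp only [dist_eq_norm]
  rfl

theorem infDist_smul (c : 𝕜) (x : E) : Metric.infDist (c • x) K = ‖c‖ * Metric.infDist x K := by
  rw [infDist_eq_norm_starProjection_orthogonal, infDist_eq_norm_starProjection_orthogonal,
    map_smul, norm_smul]

theorem infDist_le_infDist_smul {c : 𝕜} (hc : 1 ≤ ‖c‖) (x : E) :
    Metric.infDist x K ≤ Metric.infDist (c • x) K := by
  rw [infDist_smul]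
  exact le_mul_of_one_le_left Metric.infDist_nonneg hc

theorem infDist_sub_le (x y : E) :
    Metric.infDist (x - y) K ≤ Metric.infDist x K + Metric.infDist y K := by
  simp only [infDist_eq_norm_starProjection_orthogonal, map_sub]
  exact norm_sub_le _ _

end Submodule

namespace Orthonormal

variable {𝕜 E ι : Type*} [RCLike 𝕜] [NormedAddCommGroup E] [InnerProductSpace 𝕜 E] [Fintype ι]
  {e : ι → E} (he : Orthonormal 𝕜 e) (K : Submodule 𝕜 E) [FiniteDimensional 𝕜 K]
include he

theorem sum_norm_sq_starProjection_le_finrank :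
    ∑ i, ‖K.starProjection (e i)‖ ^ 2 ≤ Module.finrank 𝕜 K := by
  let b := stdOrthonormalBasis 𝕜 K
  have hproj : ∀ i, ‖K.starProjection (e i)‖ ^ 2 = ∑ j, ‖inner 𝕜 (e i) (b j : E)‖ ^ 2 := by
    intro i
    rw [Submodule.starProjection_apply, Submodule.norm_coe, ← b.sum_sq_norm_inner_right]
    refine Finset.sum_congr rfl fun j _ => ?_
    rw [Submodule.inner_orthogonalProjectionOnto_eq_of_mem_left, norm_inner_symm]
  calc ∑ i, ‖K.starProjection (e i)‖ ^ 2
      = ∑ j, ∑ i, ‖inner 𝕜 (e i) (b j : E)‖ ^ 2 := by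
        simp_rw [hproj]; exact Finset.sum_comm
    _ ≤ ∑ j : Fin (Module.finrank 𝕜 K), (1 : ℝ) := by
        refine Finset.sum_le_sum fun j _ => ?_
        simpa [Submodule.norm_coe, b.orthonormal.1 j] using
          he.sum_inner_products_le (s := Finset.univ) (b j : E)
    _ = Module.finrank 𝕜 K := by simp

theorem card_sub_finrank_le_sum_infDist_sq :
    (Fintype.card ι : ℝ) - Module.finrank 𝕜 K ≤ ∑ i, Metric.infDist (e i) K ^ 2 := by
  have hpyth : ∀ i, Metric.infDist (e i) K ^ 2 = 1 - ‖K.starProjection (e i)‖ ^ 2 := by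
    intro i
    rw [K.infDist_eq_norm_starProjection_orthogonal, ← one_pow 2, ← he.1 i,
      K.norm_sq_eq_add_norm_sq_starProjection (e i)]
    ring
  simp only [hpyth, Finset.sum_sub_distrib, Finset.sum_const, Finset.card_univ, nsmul_eq_mul,
    mul_one]
  linarith [he.sum_norm_sq_starProjection_le_finrank K]

theorem card_sub_finrank_le_mul_sq {r : ℝ} (hr : ∀ i, Metric.infDist (e i) K ≤ r) :
    (Fintype.card ι : ℝ) - Module.finrank 𝕜 K ≤ Fintype.card ι * r ^ 2 := by
  refine (he.card_sub_finrank_le_sum_infDist_sq K).trans ?_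
  calc ∑ i, Metric.infDist (e i) K ^ 2 ≤ ∑ _i : ι, r ^ 2 := by
        gcongr with i
        exacts [Metric.infDist_nonneg, hr i]
    _ = Fintype.card ι * r ^ 2 := by simp

end Orthonormal

theorem orthonormal_smul_indicatorConstLp_one {α ι : Type*} [MeasurableSpace α] {μ : Measure α}
    {s : ι → Set α} (hs : ∀ i, MeasurableSet (s i)) (hμs : ∀ i, μ (s i) ≠ ⊤)
    (hd : Pairwise (Disjoint on s)) {c : ℝ} (hc : ∀ i, c ^ 2 * μ.real (s i) = 1) :
    Orthonormal ℝ fun i => c • indicatorConstLp 2 (hs i) (hμs i) (1 : ℝ) := by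
  classical
  rw [orthonormal_iff_ite]
  intro i j
  rw [real_inner_smul_left, real_inner_smul_right,
    L2.real_inner_indicatorConstLp_one_indicatorConstLp_one (hs i) (hs j) (hμs i) (hμs j)]
  split_ifs with hij
  · rw [hij, Set.inter_self, ← mul_assoc, ← sq, hc]
  · rw [(hd hij).inter_eq, measureReal_empty, mul_zero, mul_zero]

section Step

noncomputable def stepLp (μ : Measure ℝ) [IsFiniteMeasure μ] (z : ℝ) : Lp ℝ 2 μ :=
  indicatorConstLp 2 (measurableSet_Iic (a := z)) (measure_ne_top μ _) 1

variable {μ : Measure ℝ} [IsFiniteMeasure μ]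

theorem eq_smul_stepLp_of_ae_eq {f : Lp ℝ 2 μ} {c z : ℝ}
    (hf : f =ᵐ[μ] fun x => if x ≤ z then c else 0) : f = c • stepLp μ z := by
  ext1
  filter_upwards [hf, Lp.coeFn_smul c (stepLp μ z),
    indicatorConstLp_coeFn (p := 2) (hs := measurableSet_Iic (a := z)) (c := (1 : ℝ))
      (hμs := measure_ne_top _ _)] with x hfx hsmul hstep
  rw [hfx, hsmul, Pi.smul_apply, stepLp, hstep]
  by_cases hxz : x ≤ z <;> simp [hxz]

theorem norm_stepLp_le (z : ℝ) : ‖stepLp μ z‖ ≤ √(μ.real Set.univ) := by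
  refine norm_indicatorConstLp_le.trans ?_
  rw [norm_one, one_mul, ENNReal.toReal_ofNat, ← Real.sqrt_eq_rpow]
  exact Real.sqrt_le_sqrt (measureReal_mono (Set.subset_univ _))

theorem stepLp_sub_stepLp {a b : ℝ} (hab : a ≤ b) :
    stepLp μ b - stepLp μ a =
      indicatorConstLp 2 (measurableSet_Ioc (a := a) (b := b)) (measure_ne_top μ _) 1 := by
  rw [stepLp, stepLp, sub_eq_iff_eq_add', ← indicatorConstLp_disjoint_union _ _ _ _
    (Set.Iic_disjoint_Ioc le_rfl)]
  congr 1
  exact (Set.Iic_union_Ioc_eq_Iic hab).symm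

end Step

section UnitInterval

variable {s : Set ℝ} [IsFiniteMeasure (volume.restrict s)] (hs : Set.Ioc 0 1 ⊆ s)
include hs

theorem orthonormal_sqrt_smul_stepLp_sub {N : ℕ} (hN : 0 < N) :
    Orthonormal ℝ fun k : Fin N =>
      √N • (stepLp (volume.restrict s) ((k + 1) / N) - stepLp (volume.restrict s) (k / N)) := by
  have hNR : (0 : ℝ) < N := Nat.cast_pos.mpr hN
  set I : ℕ → Set ℝ := fun n => Set.Ioc (n / N) ((n + 1) / N)
  have hI : ∀ k : Fin N, I k ⊆ s := by
    refine fun k => (Set.Ioc_subset_Ioc ?_ ?_).trans hs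
    · positivity
    · rw [div_le_one hNR]; exact_mod_cast k.2
  have hdisj : Pairwise (Disjoint on fun k : Fin N => I k) := by
    have hmono : Monotone fun n : ℕ => (n : ℝ) / N := fun a b hab => by
      dsimp only; gcongr
    simpa [Function.onFun, Nat.cast_add_one] using
      (hmono.pairwise_disjoint_on_Ioc_succ.comp_of_injective Fin.val_injective)
  have hvol : ∀ k : Fin N, √N ^ 2 * (volume.restrict s).real (I k) = 1 := by
    intro k
    rw [measureReal_restrict_apply measurableSet_Ioc, Set.inter_eq_left.mpr (hI k),
      Real.volume_real_Ioc_of_le (by gcongr; linarith), Real.sq_sqrt hNR.le]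
    field_simp
    ring
  convert orthonormal_smul_indicatorConstLp_one (fun k : Fin N => measurableSet_Ioc)
    (fun k => measure_ne_top _ _) hdisj hvol with k
  exact stepLp_sub_stepLp (by gcongr; linarith)

variable (K : Submodule ℝ (Lp ℝ 2 (volume.restrict s))) [FiniteDimensional ℝ K] {S : ℝ}
  (hS : ∀ z ∈ Set.Icc (0 : ℝ) 1, Metric.infDist (stepLp (volume.restrict s) z) K ≤ S)
include hS

theorem natCast_sub_finrank_le_of_forall_infDist_stepLp_le {N : ℕ} (hN : 0 < N) :
    (N : ℝ) - Module.finrank ℝ K ≤ N ^ 2 * (2 * S) ^ 2 := by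
  have hdist : ∀ k : Fin N, Metric.infDist (√N • (stepLp (volume.restrict s) ((k + 1) / N)
      - stepLp (volume.restrict s) (k / N))) K ≤ √N * (2 * S) := by
    intro k
    have hk : ((k : ℕ) : ℝ) + 1 ≤ N := by exact_mod_cast k.2
    have hgrid : ∀ t : ℝ, 0 ≤ t → t ≤ N → t / N ∈ Set.Icc (0 : ℝ) 1 := fun t ht₀ ht₁ =>
      ⟨by positivity, div_le_one_of_le₀ ht₁ (Nat.cast_nonneg _)⟩
    rw [K.infDist_smul, Real.norm_of_nonneg (Real.sqrt_nonneg _), two_mul]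
    gcongr
    refine (K.infDist_sub_le _ _).trans (add_le_add (hS _ (hgrid _ ?_ hk)) (hS _ (hgrid _ ?_ ?_)))
      <;> first | positivity | linarith
  have := (orthonormal_sqrt_smul_stepLp_sub hs hN).card_sub_finrank_le_mul_sq K hdist
  rwa [Fintype.card_fin, mul_pow, Real.sq_sqrt (Nat.cast_nonneg _), ← mul_assoc, ← sq] at this

theorem div_sqrt_le_of_forall_infDist_stepLp_le {m : ℕ} (hm : 1 ≤ m)
    (hK : Module.finrank ℝ K ≤ m) : 1 / 4 / √m ≤ S := by
  have hS0 : 0 ≤ S := Metric.infDist_nonneg.trans (hS 0 ⟨le_rfl, zero_le_one⟩)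
  have key := natCast_sub_finrank_le_of_forall_infDist_stepLp_le hs K hS (N := 2 * m) (by omega)
  have hmR : (1 : ℝ) ≤ m := by exact_mod_cast hm
  have hKR : (Module.finrank ℝ K : ℝ) ≤ m := by exact_mod_cast hK
  push_cast at key
  rw [← pow_le_pow_iff_left₀ (by positivity) hS0 two_ne_zero, div_pow,
    Real.sq_sqrt (by positivity), div_le_iff₀ (by positivity)]
  nlinarith

end UnitInterval

/-- Example A.1: the Kolmogorov `m`-width of the set of step functions
`{g(·, z)|_Ω : z ∈ [0, 1]}` in `L²(Ω)`, `Ω = (-1, 2)`, decays no faster than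
`m^{-1/2}`: there is `C > 0` such that for every `m ≥ 1` and every subspace `V`
of dimension `≤ m`, the sup over `z ∈ [0,1]` of the distance from `g(·, z)` to
`V` is at least `C / √m`. -/
theorem step_functions_mwidth_lower_bound
    (g : ℝ → ℝ → ℝ)
    (hg : ∀ x z : ℝ, g x z = if x ≤ z then 1 + z else 0)
    (μ : Measure ℝ) (hμ : μ = volume.restrict (Set.Ioo (-1 : ℝ) 2))
    (U : ℝ → Lp ℝ 2 μ)
    (hU : ∀ z ∈ Set.Icc (0 : ℝ) 1, U z =ᵐ[μ] fun x => g x z) :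
    ∃ C > (0 : ℝ), ∀ m : ℕ, 1 ≤ m →
      ∀ V : Submodule ℝ (Lp ℝ 2 μ), Module.rank ℝ ↥V ≤ m →
        C / Real.sqrt m
          ≤ ⨆ z : Set.Icc (0 : ℝ) 1,
              Metric.infDist (U z) (V : Set (Lp ℝ 2 μ)) := by
  have : IsFiniteMeasure μ := hμ ▸ inferInstance
  have hU_eq : ∀ z ∈ Set.Icc (0 : ℝ) 1, U z = (1 + z) • stepLp μ z := fun z hz =>
    eq_smul_stepLp_of_ae_eq (by simpa only [hg] using hU z hz)
  refine ⟨1 / 4, by norm_num, fun m hm V hV => ?_⟩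
  have : FiniteDimensional ℝ V :=
    Module.rank_lt_aleph0_iff.mp (hV.trans_lt Cardinal.natCast_lt_aleph0)
  have hbdd : BddAbove (Set.range fun z : Set.Icc (0 : ℝ) 1 =>
      Metric.infDist (U z) (V : Set (Lp ℝ 2 μ))) := by
    refine ⟨2 * √(μ.real Set.univ), ?_⟩
    rintro _ ⟨⟨z, hz⟩, rfl⟩
    refine (Metric.infDist_le_dist_of_mem V.zero_mem).trans ?_
    rw [dist_zero_right, hU_eq z hz, norm_smul, Real.norm_of_nonneg (by linarith [hz.1])]
    exact mul_le_mul (by linarith [hz.2]) (norm_stepLp_le z) (norm_nonneg _) zero_le_two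
  have hstep : ∀ z ∈ Set.Icc (0 : ℝ) 1, Metric.infDist (stepLp μ z) V
      ≤ ⨆ z : Set.Icc (0 : ℝ) 1, Metric.infDist (U z) (V : Set (Lp ℝ 2 μ)) := fun z hz => by
    refine (V.infDist_le_infDist_smul (c := 1 + z) ?_ _).trans ?_
    · rw [Real.norm_of_nonneg (by linarith [hz.1])]; linarith [hz.1]
    · rw [← hU_eq z hz]; exact le_ciSup hbdd ⟨z, hz⟩
  subst hμ
  exact div_sqrt_le_of_forall_infDist_stepLp_le
    (Set.Ioc_subset_Ioo (show (-1 : ℝ) ≤ 0 by norm_num) (show (1 : ℝ) < 2 by norm_num))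
    V hstep hm (Module.finrank_le_of_rank_le hV)
end
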